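/- Let p be a probability distribution on the product of finite state spaces ∏_{k=1}^{n} Ω_k that factorizes as a product of its marginals, and similarly for q. If the ground metric on the product space is the sum of metrics on each factor (e.g., the Hamming distance on {0,1}ⁿ), then EMD(p, q) = ∑_{k=1}^{n} EMD(p_k, q_k). -/
import Mathlib
set_option maxHeartbeats 1000000
set_option linter.unusedSectionVars false
set_option linter.unusedVariables false


open scoped BigOperators

/-- A probability distribution on a finite set. -/
def IsProb {Ω : Type*} [Fintype Ω] (p : Ω → ℝ) : Prop :=
  (∀ i, 0 ≤ p i) ∧ ∑ i, p i = 1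

/-- A flow from `p` to `q`: nonnegative, with row marginals `p` and column marginals `q`. -/
def IsFlow {Ω : Type*} [Fintype Ω] (p q : Ω → ℝ) (f : Ω → Ω → ℝ) : Prop :=
  (∀ i j, 0 ≤ f i j) ∧ (∀ i, ∑ j, f i j = p i) ∧ (∀ j, ∑ i, f i j = q j)

/-- The earth mover's distance with ground distance `D`. -/
noncomputable def EMD {Ω : Type*} [Fintype Ω] (D : Ω → Ω → ℝ) (p q : Ω → ℝ) : ℝ :=
  sInf {c : ℝ | ∃ f : Ω → Ω → ℝ, IsFlow p q f ∧ c = ∑ i, ∑ j, f i j * D i j}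

/-- `D` is a metric. -/
def IsMetric {Ω : Type*} (D : Ω → Ω → ℝ) : Prop :=
  (∀ x y, 0 ≤ D x y) ∧ (∀ x y, D x y = 0 ↔ x = y) ∧ (∀ x y, D x y = D y x) ∧
    (∀ x y z, D x z ≤ D x y + D y z)


section PiSums

variable {ι : Type*} [Fintype ι] [DecidableEq ι] {β : ι → Type*} [∀ i, Fintype (β i)]

lemma sum_pi_prod (h : ∀ i, β i → ℝ) :
    ∑ x : ∀ i, β i, ∏ i, h i (x i) = ∏ i, ∑ a, h i a := by
  rw [Finset.prod_univ_sum, Fintype.piFinset_univ]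

lemma prod_update_apply (g : ∀ i, β i → ℝ) (k : ι) (w : β k → ℝ) (z : ∀ i, β i) :
    ∏ i, Function.update g k w i (z i)
      = w (z k) * ∏ i ∈ Finset.univ.erase k, g i (z i) := by
  rw [← Finset.mul_prod_erase Finset.univ _ (Finset.mem_univ k), Function.update_self]
  congr 1
  refine Finset.prod_congr rfl fun i hi => ?_
  rw [Function.update_of_ne (Finset.ne_of_mem_erase hi)]

lemma sum_pi_single_factor (g : ∀ i, β i → ℝ) (k : ι) (w : β k → ℝ)
    (hg : ∀ i, i ≠ k → ∑ a, g i a = 1) :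
    ∑ x : ∀ i, β i, w (x k) * ∏ i, g i (x i) = ∑ a, w a * g k a := by
  have e1 : ∀ x : ∀ i, β i,
      w (x k) * ∏ i, g i (x i)
        = ∏ i, Function.update g k (fun a => w a * g k a) i (x i) := by
    intro x
    rw [prod_update_apply,
      ← Finset.mul_prod_erase Finset.univ (fun i => g i (x i)) (Finset.mem_univ k)]
    ring
  calc ∑ x : ∀ i, β i, w (x k) * ∏ i, g i (x i)
      = ∑ x : ∀ i, β i, ∏ i, Function.update g k (fun a => w a * g k a) i (x i) :=
        Finset.sum_congr rfl fun x _ => e1 x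
    _ = ∏ i, ∑ a, Function.update g k (fun a => w a * g k a) i a := sum_pi_prod _
    _ = ∑ a, w a * g k a := by
        rw [← Finset.mul_prod_erase Finset.univ _ (Finset.mem_univ k), Function.update_self]
        have h1 : ∏ i ∈ Finset.univ.erase k,
            (∑ a, Function.update g k (fun a => w a * g k a) i a) = 1 := by
          refine Finset.prod_eq_one fun i hi => ?_
          rw [show Function.update g k (fun a => w a * g k a) i = g i from
            Function.update_of_ne (Finset.ne_of_mem_erase hi) _ _]
          exact hg i (Finset.ne_of_mem_erase hi)
        rw [h1, mul_one]

def piProdEquiv : (∀ i, β i × β i) ≃ (∀ i, β i) × (∀ i, β i) where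
  toFun z := (fun i => (z i).1, fun i => (z i).2)
  invFun xy i := (xy.1 i, xy.2 i)
  left_inv z := rfl
  right_inv xy := rfl

lemma sum_pair (Φ : (∀ i, β i) → (∀ i, β i) → ℝ) :
    ∑ x : ∀ i, β i, ∑ y : ∀ i, β i, Φ x y
      = ∑ z : ∀ i, β i × β i, Φ (fun i => (z i).1) (fun i => (z i).2) := by
  rw [← Fintype.sum_prod_type' (f := Φ)]
  exact (Equiv.sum_comp (piProdEquiv (β := β)) (fun p => Φ p.1 p.2)).symm

lemma sum_sum_prod (G : ∀ i, β i → β i → ℝ) :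
    ∑ x : ∀ i, β i, ∑ y : ∀ i, β i, ∏ i, G i (x i) (y i)
      = ∏ i, ∑ a, ∑ b, G i a b := by
  rw [sum_pair (fun x y => ∏ i, G i (x i) (y i))]
  rw [sum_pi_prod (β := fun i => β i × β i) (fun i ab => G i ab.1 ab.2)]
  exact Finset.prod_congr rfl fun i _ => Fintype.sum_prod_type' (f := G i)

lemma sum_sum_single_factor (G : ∀ i, β i → β i → ℝ) (k : ι) (w : β k → β k → ℝ)
    (hG : ∀ i, i ≠ k → ∑ a, ∑ b, G i a b = 1) :
    ∑ x : ∀ i, β i, ∑ y : ∀ i, β i, w (x k) (y k) * ∏ i, G i (x i) (y i)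
      = ∑ a, ∑ b, w a b * G k a b := by
  rw [sum_pair (fun x y => w (x k) (y k) * ∏ i, G i (x i) (y i))]
  rw [sum_pi_single_factor (β := fun i => β i × β i) (fun i ab => G i ab.1 ab.2) k
    (fun ab => w ab.1 ab.2) (fun i hi => by
      rw [Fintype.sum_prod_type' (f := G i)]; exact hG i hi)]
  exact Fintype.sum_prod_type' (f := fun a b => w a b * G k a b)

end PiSums


lemma sum_comm3 {α β γ : Type*} [Fintype α] [Fintype β] [Fintype γ] (T : α → β → γ → ℝ) :
    ∑ a : α, ∑ x : β, ∑ y : γ, T a x y = ∑ x : β, ∑ y : γ, ∑ a : α, T a x y :=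
  (Finset.sum_comm).trans (Finset.sum_congr rfl fun x _ => Finset.sum_comm)


section EMDbasic

variable {Ω : Type*} [Fintype Ω]

lemma isFlow_tensor {p q : Ω → ℝ} (hp : IsProb p) (hq : IsProb q) :
    IsFlow p q (fun i j => p i * q j) := by
  refine ⟨fun i j => mul_nonneg (hp.1 i) (hq.1 j), fun i => ?_, fun j => ?_⟩
  · rw [← Finset.mul_sum, hq.2, mul_one]
  · rw [← Finset.sum_mul, hp.2, one_mul]

lemma costSet_nonempty {D : Ω → Ω → ℝ} {p q : Ω → ℝ} (hp : IsProb p) (hq : IsProb q) :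
    Set.Nonempty {c : ℝ | ∃ f : Ω → Ω → ℝ, IsFlow p q f ∧ c = ∑ i, ∑ j, f i j * D i j} :=
  ⟨_, fun i j => p i * q j, isFlow_tensor hp hq, rfl⟩

lemma cost_nonneg {D : Ω → Ω → ℝ} (hD : ∀ x y, 0 ≤ D x y) {p q f : _} (hf : IsFlow p q f) :
    0 ≤ ∑ i, ∑ j, f i j * D i j :=
  Finset.sum_nonneg fun i _ => Finset.sum_nonneg fun j _ => mul_nonneg (hf.1 i j) (hD i j)

lemma costSet_bddBelow {D : Ω → Ω → ℝ} {p q : Ω → ℝ} (hD : ∀ x y, 0 ≤ D x y) :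
    BddBelow {c : ℝ | ∃ f : Ω → Ω → ℝ, IsFlow p q f ∧ c = ∑ i, ∑ j, f i j * D i j} := by
  refine ⟨0, ?_⟩
  rintro c ⟨f, hf, rfl⟩
  exact cost_nonneg hD hf

lemma EMD_le_cost {D : Ω → Ω → ℝ} {p q f : _} (hD : ∀ x y, 0 ≤ D x y) (hf : IsFlow p q f) :
    EMD D p q ≤ ∑ i, ∑ j, f i j * D i j :=
  csInf_le (costSet_bddBelow hD) ⟨f, hf, rfl⟩

lemma exists_near_optimal_flow {D : Ω → Ω → ℝ} {p q : Ω → ℝ}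
    (hp : IsProb p) (hq : IsProb q) {ε : ℝ} (hε : 0 < ε) :
    ∃ f : Ω → Ω → ℝ, IsFlow p q f ∧ ∑ i, ∑ j, f i j * D i j < EMD D p q + ε := by
  obtain ⟨c, ⟨f, hf, rfl⟩, hlt⟩ :=
    Real.lt_sInf_add_pos (costSet_nonempty (D := D) hp hq) hε
  exact ⟨f, hf, hlt⟩

end EMDbasic


theorem emd_product_n_factors
    {n : ℕ} (Ω : Fin n → Type*) [∀ k, Fintype (Ω k)]
    (D : ∀ k, Ω k → Ω k → ℝ) (hD : ∀ k, IsMetric (D k))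
    (p q : ∀ k, Ω k → ℝ)
    (hp : ∀ k, IsProb (p k)) (hq : ∀ k, IsProb (q k)) :
    EMD (fun x y : ∀ k, Ω k => ∑ k, D k (x k) (y k))
        (fun x : ∀ k, Ω k => ∏ k, p k (x k))
        (fun x : ∀ k, Ω k => ∏ k, q k (x k))
      = ∑ k, EMD (D k) (p k) (q k) := by
  classical
  have hDnn : ∀ k, ∀ (a b : Ω k), 0 ≤ D k a b := fun k => (hD k).1
  have hDsum_nn : ∀ x y : ∀ k, Ω k, 0 ≤ ∑ k, D k (x k) (y k) :=
    fun x y => Finset.sum_nonneg fun k _ => hDnn k _ _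
  have hPprob : IsProb (fun x : ∀ k, Ω k => ∏ k, p k (x k)) := by
    refine ⟨fun x => Finset.prod_nonneg fun k _ => (hp k).1 _, ?_⟩
    rw [sum_pi_prod (fun k a => p k a)]
    exact Finset.prod_eq_one fun k _ => (hp k).2
  have hQprob : IsProb (fun x : ∀ k, Ω k => ∏ k, q k (x k)) := by
    refine ⟨fun x => Finset.prod_nonneg fun k _ => (hq k).1 _, ?_⟩
    rw [sum_pi_prod (fun k a => q k a)]
    exact Finset.prod_eq_one fun k _ => (hq k).2
  apply le_antisymm
  · -- upper bound
    refine le_of_forall_pos_le_add fun ε hε => ?_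
    have hεn : (0:ℝ) < ε / (n + 1) := by positivity
    have hex : ∀ k, ∃ f : Ω k → Ω k → ℝ, IsFlow (p k) (q k) f ∧
        ∑ a, ∑ b, f a b * D k a b < EMD (D k) (p k) (q k) + ε / (n + 1) :=
      fun k => exists_near_optimal_flow (hp k) (hq k) hεn
    choose f hfFlow hfCost using hex
    have hmass : ∀ k, ∑ a, ∑ b, f k a b = 1 := by
      intro k
      calc ∑ a, ∑ b, f k a b = ∑ a, p k a :=
            Finset.sum_congr rfl fun a _ => (hfFlow k).2.1 a
        _ = 1 := (hp k).2
    set F : (∀ k, Ω k) → (∀ k, Ω k) → ℝ := fun x y => ∏ k, f k (x k) (y k) with hFdef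
    have hFflow : IsFlow (fun x : ∀ k, Ω k => ∏ k, p k (x k))
        (fun x : ∀ k, Ω k => ∏ k, q k (x k)) F := by
      refine ⟨fun x y => Finset.prod_nonneg fun k _ => (hfFlow k).1 _ _, fun x => ?_, fun y => ?_⟩
      · rw [show (∑ y : ∀ k, Ω k, F x y) = ∑ y : ∀ k, Ω k, ∏ k, f k (x k) (y k) from rfl,
          sum_pi_prod (fun k b => f k (x k) b)]
        exact Finset.prod_congr rfl fun k _ => (hfFlow k).2.1 _
      · rw [show (∑ x : ∀ k, Ω k, F x y) = ∑ x : ∀ k, Ω k, ∏ k, f k (x k) (y k) from rfl,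
          sum_pi_prod (fun k a => f k a (y k))]
        exact Finset.prod_congr rfl fun k _ => (hfFlow k).2.2 _
    have hFcost : ∑ x : ∀ k, Ω k, ∑ y : ∀ k, Ω k, F x y * ∑ k, D k (x k) (y k)
        = ∑ k, ∑ a, ∑ b, f k a b * D k a b := by
      have e : ∀ x y : ∀ k, Ω k, F x y * ∑ k, D k (x k) (y k)
          = ∑ k, D k (x k) (y k) * ∏ j, f j (x j) (y j) := by
        intro x y
        rw [Finset.mul_sum]
        exact Finset.sum_congr rfl fun k _ => mul_comm _ _
      simp_rw [e]
      rw [show (∑ x : ∀ k, Ω k, ∑ y : ∀ k, Ω k, ∑ k, D k (x k) (y k) * ∏ j, f j (x j) (y j))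
          = ∑ k, ∑ x : ∀ k, Ω k, ∑ y : ∀ k, Ω k, D k (x k) (y k) * ∏ j, f j (x j) (y j) from
        (Finset.sum_congr rfl fun x _ => Finset.sum_comm).trans (Finset.sum_comm)]
      refine Finset.sum_congr rfl fun k _ => ?_
      rw [sum_sum_single_factor f k (D k) (fun j _ => hmass j)]
      exact Finset.sum_congr rfl fun a _ => Finset.sum_congr rfl fun b _ => mul_comm _ _
    calc EMD (fun x y : ∀ k, Ω k => ∑ k, D k (x k) (y k)) _ _
        ≤ ∑ x : ∀ k, Ω k, ∑ y : ∀ k, Ω k, F x y * ∑ k, D k (x k) (y k) :=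
          EMD_le_cost hDsum_nn hFflow
      _ = ∑ k, ∑ a, ∑ b, f k a b * D k a b := hFcost
      _ ≤ ∑ k, (EMD (D k) (p k) (q k) + ε / (n + 1)) :=
          Finset.sum_le_sum fun k _ => (hfCost k).le
      _ ≤ (∑ k, EMD (D k) (p k) (q k)) + ε := by
          rw [Finset.sum_add_distrib, Finset.sum_const, Finset.card_univ, Fintype.card_fin,
            nsmul_eq_mul]
          have h1 : (0:ℝ) < (n:ℝ) + 1 := by positivity
          have : (n:ℝ) * (ε / (n + 1)) ≤ ε := by
            rw [mul_div_assoc', div_le_iff₀ h1]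
            nlinarith [hε.le]
          linarith
  · -- lower bound
    refine le_csInf (costSet_nonempty hPprob hQprob) ?_
    rintro c ⟨F, hF, rfl⟩
    set g : ∀ k, Ω k → Ω k → ℝ := fun k a b =>
      ∑ x : ∀ k, Ω k, ∑ y : ∀ k, Ω k,
        if x k = a then if y k = b then F x y else 0 else 0 with hgdef
    have fiber_p : ∀ (k) (a : Ω k),
        ∑ x : ∀ k, Ω k, (if x k = a then ∏ j, p j (x j) else 0) = p k a := by
      intro k a
      have e : ∀ x : ∀ k, Ω k, (if x k = a then ∏ j, p j (x j) else 0)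
          = (if x k = a then (1:ℝ) else 0) * ∏ j, p j (x j) := by
        intro x; split_ifs <;> simp
      simp_rw [e]
      rw [sum_pi_single_factor p k (fun c => if c = a then (1:ℝ) else 0)
        (fun j _ => (hp j).2)]
      simp
    have fiber_q : ∀ (k) (b : Ω k),
        ∑ y : ∀ k, Ω k, (if y k = b then ∏ j, q j (y j) else 0) = q k b := by
      intro k b
      have e : ∀ y : ∀ k, Ω k, (if y k = b then ∏ j, q j (y j) else 0)
          = (if y k = b then (1:ℝ) else 0) * ∏ j, q j (y j) := by
        intro y; split_ifs <;> simp
      simp_rw [e]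
      rw [sum_pi_single_factor q k (fun c => if c = b then (1:ℝ) else 0)
        (fun j _ => (hq j).2)]
      simp
    have hgflow : ∀ k, IsFlow (p k) (q k) (g k) := by
      intro k
      refine ⟨fun a b => Finset.sum_nonneg fun x _ => Finset.sum_nonneg fun y _ => by
        split_ifs
        · exact hF.1 x y
        · exact le_refl 0
        · exact le_refl 0, fun a => ?_, fun b => ?_⟩
      · -- row marginal
        simp only [hgdef]
        calc ∑ b, ∑ x : ∀ k, Ω k, ∑ y : ∀ k, Ω k,
              (if x k = a then if y k = b then F x y else 0 else 0)
            = ∑ x : ∀ k, Ω k, ∑ y : ∀ k, Ω k, ∑ b,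
              (if x k = a then if y k = b then F x y else 0 else 0) :=
              by rw [sum_comm3]
          _ = ∑ x : ∀ k, Ω k, ∑ y : ∀ k, Ω k, (if x k = a then F x y else 0) := by
              refine Finset.sum_congr rfl fun x _ => Finset.sum_congr rfl fun y _ => ?_
              by_cases h : x k = a <;> simp [h, Finset.sum_ite_eq]
          _ = ∑ x : ∀ k, Ω k, (if x k = a then ∏ j, p j (x j) else 0) := by
              refine Finset.sum_congr rfl fun x _ => ?_
              by_cases h : x k = a <;> simp [h, hF.2.1 x]
          _ = p k a := fiber_p k a
      · -- column marginal
        simp only [hgdef]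
        calc ∑ a, ∑ x : ∀ k, Ω k, ∑ y : ∀ k, Ω k,
              (if x k = a then if y k = b then F x y else 0 else 0)
            = ∑ x : ∀ k, Ω k, ∑ y : ∀ k, Ω k, ∑ a,
              (if x k = a then if y k = b then F x y else 0 else 0) :=
              by rw [sum_comm3]
          _ = ∑ x : ∀ k, Ω k, ∑ y : ∀ k, Ω k, (if y k = b then F x y else 0) := by
              refine Finset.sum_congr rfl fun x _ => Finset.sum_congr rfl fun y _ => ?_
              simp [Finset.sum_ite_eq]
          _ = ∑ y : ∀ k, Ω k, ∑ x : ∀ k, Ω k, (if y k = b then F x y else 0) :=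
              Finset.sum_comm
          _ = ∑ y : ∀ k, Ω k, (if y k = b then ∏ j, q j (y j) else 0) := by
              refine Finset.sum_congr rfl fun y _ => ?_
              by_cases h : y k = b <;> simp [h, hF.2.2 y]
          _ = q k b := fiber_q k b
    have hcost : ∑ x : ∀ k, Ω k, ∑ y : ∀ k, Ω k, F x y * ∑ k, D k (x k) (y k)
        = ∑ k, ∑ a, ∑ b, g k a b * D k a b := by
      have e1 : ∀ x y : ∀ k, Ω k, F x y * ∑ k, D k (x k) (y k)
          = ∑ k, F x y * D k (x k) (y k) := fun x y => Finset.mul_sum _ _ _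
      simp_rw [e1]
      rw [← sum_comm3 fun k (x y : ∀ k, Ω k) => F x y * D k (x k) (y k)]
      refine Finset.sum_congr rfl fun k _ => ?_
      have e2 : ∀ a b : Ω k, g k a b * D k a b
          = ∑ x : ∀ k, Ω k, ∑ y : ∀ k, Ω k,
            (if x k = a then if y k = b then F x y * D k a b else 0 else 0) := by
        intro a b
        rw [hgdef]
        dsimp only
        rw [Finset.sum_mul]
        refine Finset.sum_congr rfl fun x _ => ?_
        rw [Finset.sum_mul]
        refine Finset.sum_congr rfl fun y _ => ?_
        split_ifs <;> simp
      simp_rw [e2]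
      symm
      calc ∑ a, ∑ b, ∑ x : ∀ k, Ω k, ∑ y : ∀ k, Ω k,
              (if x k = a then if y k = b then F x y * D k a b else 0 else 0)
          = ∑ a, ∑ x : ∀ k, Ω k, ∑ y : ∀ k, Ω k, ∑ b,
              (if x k = a then if y k = b then F x y * D k a b else 0 else 0) :=
            Finset.sum_congr rfl fun a _ => by rw [sum_comm3]
        _ = ∑ x : ∀ k, Ω k, ∑ y : ∀ k, Ω k, ∑ a, ∑ b,
              (if x k = a then if y k = b then F x y * D k a b else 0 else 0) :=
            by rw [sum_comm3]
        _ = ∑ x : ∀ k, Ω k, ∑ y : ∀ k, Ω k, F x y * D k (x k) (y k) := by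
            refine Finset.sum_congr rfl fun x _ => Finset.sum_congr rfl fun y _ => ?_
            simp [Finset.sum_ite_eq]
    rw [hcost]
    refine Finset.sum_le_sum fun k _ => ?_
    exact EMD_le_cost (hDnn k) (hgflow k)
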